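/- (Butterfly condition implies convexity of call prices in strike.) Let τ > 0, F > 0 and let v : ℝ → (0,∞) be twice differentiable with But(τ, k, v(k), v'(k), v''(k)) ≥ 0 for all k ∈ ℝ. Then the function K ↦ F · BS(τ, log(K/F), v(log(K/F))) is convex on (0,∞). -/

import Mathlib

open Real Filter Set

/-- Standard normal probability density function. -/
noncomputable def stdGaussPDF (x : ℝ) : ℝ :=
  (Real.sqrt (2 * Real.pi))⁻¹ * Real.exp (-(x ^ 2) / 2)

/-- Standard normal cumulative distribution function. -/
noncomputable def stdGaussCDF (x : ℝ) : ℝ :=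
  ∫ t in Set.Iic x, stdGaussPDF t

/-- d1 term of the Black–Scholes formula. -/
noncomputable def d1 (τ k v : ℝ) : ℝ :=
  -k / (v * Real.sqrt τ) + v * Real.sqrt τ / 2

/-- d2 term of the Black–Scholes formula. -/
noncomputable def d2 (τ k v : ℝ) : ℝ :=
  -k / (v * Real.sqrt τ) - v * Real.sqrt τ / 2

/-- Black–Scholes call price in units of the forward. -/
noncomputable def BS (τ k v : ℝ) : ℝ :=
  stdGaussCDF (d1 τ k v) - Real.exp k * stdGaussCDF (d2 τ k v)

/-- The butterfly functional. -/
noncomputable def But (τ k v₀ v₁ v₂ : ℝ) : ℝ :=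
  (1 + d1 τ k v₀ * v₁ * Real.sqrt τ) * (1 + d2 τ k v₀ * v₁ * Real.sqrt τ) + v₀ * v₂ * τ

/-!
Write `C k = BS τ k (v k)` for the call price as a function of the log-strike. The identity
`φ(d₁) = eᵏ φ(d₂)` gives `C' = eᵏ (φ(d₂) v' √τ - Φ(d₂))`, and since
`d₂' = -(1 + d₁ v' √τ) / (v √τ)`, differentiating once more gives
`C'' - C' = eᵏ φ(d₂) But / (v √τ) ≥ 0`. In the strike `K = F eᵏ` the second derivative
of `C (log (K / F))` is `(C'' - C') / K²`, so the price is convex in `K`.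
-/

open MeasureTheory

lemma continuous_stdGaussPDF : Continuous stdGaussPDF := by
  unfold stdGaussPDF
  fun_prop

lemma stdGaussPDF_pos (x : ℝ) : 0 < stdGaussPDF x := by
  unfold stdGaussPDF
  positivity

lemma stdGaussPDF_eq_gaussianPDFReal : stdGaussPDF = ProbabilityTheory.gaussianPDFReal 0 1 := by
  ext x
  simp [stdGaussPDF, ProbabilityTheory.gaussianPDFReal]

lemma integrable_stdGaussPDF : Integrable stdGaussPDF := by
  rw [stdGaussPDF_eq_gaussianPDFReal]
  exact ProbabilityTheory.integrable_gaussianPDFReal 0 1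

lemma hasDerivAt_stdGaussCDF (x : ℝ) : HasDerivAt stdGaussCDF (stdGaussPDF x) x := by
  have hsplit : stdGaussCDF = fun y => stdGaussCDF 0 + ∫ t in (0 : ℝ)..y, stdGaussPDF t := by
    ext y
    rw [stdGaussCDF, stdGaussCDF, ← intervalIntegral.integral_Iic_sub_Iic
      integrable_stdGaussPDF.integrableOn integrable_stdGaussPDF.integrableOn]
    ring
  rw [hsplit]
  exact (intervalIntegral.integral_hasDerivAt_right integrable_stdGaussPDF.intervalIntegrable
    (continuous_stdGaussPDF.stronglyMeasurableAtFilter _ _)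
    continuous_stdGaussPDF.continuousAt).const_add _

lemma hasDerivAt_stdGaussPDF (x : ℝ) : HasDerivAt stdGaussPDF (-x * stdGaussPDF x) x := by
  have h : HasDerivAt stdGaussPDF _ x :=
    (((hasDerivAt_pow 2 x).neg.div_const 2).exp).const_mul (√(2 * π))⁻¹
  refine h.congr_deriv ?_
  simp only [stdGaussPDF, Pi.neg_apply]
  ring

lemma hasDerivAt_log_div {F K : ℝ} (hF : F ≠ 0) (hK : K ≠ 0) :
    HasDerivAt (fun x => log (x / F)) K⁻¹ K := by
  have h := (hasDerivAt_log (div_ne_zero hK hF)).comp K ((hasDerivAt_id K).div_const F)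
  refine h.congr_deriv ?_
  field_simp

lemma convexOn_comp_log_div {G G' G'' : ℝ → ℝ} {F : ℝ} (hF : F ≠ 0)
    (hG : ∀ k, HasDerivAt G (G' k) k) (hG' : ∀ k, HasDerivAt G' (G'' k) k)
    (hG'' : ∀ k, G' k ≤ G'' k) :
    ConvexOn ℝ (Ioi 0) fun K => G (log (K / F)) := by
  have hf : ∀ K ∈ Ioi (0 : ℝ),
      HasDerivAt (fun x => G (log (x / F))) (G' (log (K / F)) * K⁻¹) K :=
    fun K hK => (hG _).comp K (hasDerivAt_log_div hF (ne_of_gt hK))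
  have hf' : ∀ K ∈ Ioi (0 : ℝ), HasDerivAt (fun x => G' (log (x / F)) * x⁻¹)
      ((G'' (log (K / F)) - G' (log (K / F))) / K ^ 2) K := by
    intro K hK
    have hK0 : K ≠ 0 := ne_of_gt hK
    refine (((hG' _).comp K (hasDerivAt_log_div hF hK0)).mul (hasDerivAt_inv hK0)).congr_deriv ?_
    simp only [Function.comp_apply]
    field_simp
    ring
  have hcont : ContinuousOn (fun x => G (log (x / F))) (Ioi 0) :=
    fun K hK => (hf K hK).continuousAt.continuousWithinAt
  rw [← interior_Ioi] at hf hf'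
  exact convexOn_of_hasDerivWithinAt2_nonneg (convex_Ioi 0) hcont
    (fun K hK => (hf K hK).hasDerivWithinAt) (fun K hK => (hf' K hK).hasDerivWithinAt)
    fun K _ => div_nonneg (sub_nonneg.mpr (hG'' _)) (sq_nonneg K)

section BlackScholes

variable {τ k V : ℝ}

lemma d1_eq_d2_add : d1 τ k V = d2 τ k V + V * √τ := by
  simp only [d1, d2]
  ring

lemma stdGaussPDF_d1 (hτ : 0 < τ) (hV : V ≠ 0) :
    stdGaussPDF (d1 τ k V) = exp k * stdGaussPDF (d2 τ k V) := by
  have hs : √τ ≠ 0 := (sqrt_pos.mpr hτ).ne'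
  simp only [stdGaussPDF, d1, d2]
  rw [mul_left_comm, ← exp_add]
  congr 2
  field_simp
  ring

variable {v v' v'' : ℝ → ℝ}

lemma hasDerivAt_d2_comp (hτ : 0 < τ) (hv : v k ≠ 0) (hv' : HasDerivAt v (v' k) k) :
    HasDerivAt (fun x => d2 τ x (v x))
      (-(1 + d1 τ k (v k) * v' k * √τ) / (v k * √τ)) k := by
  have hs : √τ ≠ 0 := (sqrt_pos.mpr hτ).ne'
  have hw := hv'.mul_const √τ
  have h : HasDerivAt (fun x => d2 τ x (v x)) _ k :=
    ((hasDerivAt_id k).neg.div hw (mul_ne_zero hv hs)).sub (hw.div_const 2)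
  refine h.congr_deriv ?_
  simp only [d1, Pi.neg_apply, id]
  field_simp
  ring

lemma hasDerivAt_d1_comp (hτ : 0 < τ) (hv : v k ≠ 0) (hv' : HasDerivAt v (v' k) k) :
    HasDerivAt (fun x => d1 τ x (v x))
      (-(1 + d1 τ k (v k) * v' k * √τ) / (v k * √τ) + v' k * √τ) k :=
  ((hasDerivAt_d2_comp hτ hv hv').add (hv'.mul_const √τ)).congr_of_eventuallyEq
    (.of_forall fun _ => d1_eq_d2_add)

noncomputable def callPriceDeriv (τ : ℝ) (v v' : ℝ → ℝ) (k : ℝ) : ℝ :=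
  exp k * (stdGaussPDF (d2 τ k (v k)) * v' k * √τ - stdGaussCDF (d2 τ k (v k)))

lemma hasDerivAt_BS_comp (hτ : 0 < τ) (hv : v k ≠ 0) (hv' : HasDerivAt v (v' k) k) :
    HasDerivAt (fun x => BS τ x (v x)) (callPriceDeriv τ v v' k) k := by
  have h := ((hasDerivAt_stdGaussCDF _).comp k (hasDerivAt_d1_comp hτ hv hv')).sub
    ((hasDerivAt_exp k).mul ((hasDerivAt_stdGaussCDF _).comp k (hasDerivAt_d2_comp hτ hv hv')))
  refine h.congr_deriv ?_
  rw [stdGaussPDF_d1 hτ hv, callPriceDeriv, Function.comp_apply]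
  ring

lemma hasDerivAt_callPriceDeriv (hτ : 0 < τ) (hv : v k ≠ 0) (hv' : HasDerivAt v (v' k) k)
    (hv'' : HasDerivAt v' (v'' k) k) :
    HasDerivAt (callPriceDeriv τ v v') (callPriceDeriv τ v v' k +
      exp k * stdGaussPDF (d2 τ k (v k)) * But τ k (v k) (v' k) (v'' k) / (v k * √τ)) k := by
  have hd2 := hasDerivAt_d2_comp hτ hv hv'
  have h : HasDerivAt (callPriceDeriv τ v v') _ k := (hasDerivAt_exp k).mul
    ((((hasDerivAt_stdGaussPDF _).comp k hd2).mul hv'').mul_const √τ |>.sub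
      ((hasDerivAt_stdGaussCDF _).comp k hd2))
  refine h.congr_deriv ?_
  have hs : √τ ≠ 0 := (sqrt_pos.mpr hτ).ne'
  have hτ_split : v k * v'' k * τ = v k * √τ * (v'' k * √τ) := by
    rw [mul_mul_mul_comm, mul_self_sqrt hτ.le]
  rw [callPriceDeriv, But, d1_eq_d2_add, hτ_split]
  simp only [Function.comp_apply]
  field_simp
  ring

end BlackScholes

theorem stmt11 (τ F : ℝ) (hτ : 0 < τ) (hF : 0 < F)
    (v v' v'' : ℝ → ℝ) (hv : ∀ k, 0 < v k)
    (hv' : ∀ k, HasDerivAt v (v' k) k)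
    (hv'' : ∀ k, HasDerivAt v' (v'' k) k)
    (hBut : ∀ k, 0 ≤ But τ k (v k) (v' k) (v'' k)) :
    ConvexOn ℝ (Set.Ioi (0 : ℝ))
      (fun K => F * BS τ (Real.log (K / F)) (v (Real.log (K / F)))) := by
  refine ConvexOn.smul hF.le (convexOn_comp_log_div hF.ne'
    (fun k => hasDerivAt_BS_comp hτ (hv k).ne' (hv' k))
    (fun k => hasDerivAt_callPriceDeriv hτ (hv k).ne' (hv' k) (hv'' k))
    fun k => le_add_of_nonneg_right ?_)
  exact div_nonneg (mul_nonneg (mul_nonneg (exp_pos k).le (stdGaussPDF_pos _).le) (hBut k))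
    (mul_pos (hv k) (sqrt_pos.mpr hτ)).le
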